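/- Let (G,Λ) be a self-similar k-graph and μ ∈ Λ. A collection C of idempotents in J_{ι_μ} is a cover for ι_μ (i.e., every nonzero E ≤ ι_μ intersects some element of C) if and only if the set Ω_C = {τ : (μτ,e_G,μτ) ∈ ⋃_{E∈C} E} is exhaustive in s(μ)Λ, meaning that for every λ ∈ s(μ)Λ there is τ ∈ Ω_C with Λ^min(λ,τ) ≠ ∅. -/

import Mathlib

/-- A `k`-graph: a countable small category with degree functor to `ℕ^k`
satisfying the unique factorization property.  Objects (vertices) are
identified with the paths of degree `0`. -/
structure KGraph (k : ℕ) where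
  Path : Type
  countable : Countable Path
  src : Path → Path
  rng : Path → Path
  deg : Path → Fin k → ℕ
  comp : (μ ν : Path) → src μ = rng ν → Path
  deg_src : ∀ μ, deg (src μ) = 0
  deg_rng : ∀ μ, deg (rng μ) = 0
  src_vtx : ∀ μ, deg μ = 0 → src μ = μ
  rng_vtx : ∀ μ, deg μ = 0 → rng μ = μ
  src_comp : ∀ μ ν h, src (comp μ ν h) = src ν
  rng_comp : ∀ μ ν h, rng (comp μ ν h) = rng μ
  deg_comp : ∀ μ ν h, deg (comp μ ν h) = deg μ + deg ν
  comp_assoc : ∀ μ ν ρ (h1 : src μ = rng ν) (h2 : src (comp μ ν h1) = rng ρ)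
    (h3 : src ν = rng ρ) (h4 : src μ = rng (comp ν ρ h3)),
    comp (comp μ ν h1) ρ h2 = comp μ (comp ν ρ h3) h4
  rng_id_comp : ∀ μ (h : src (rng μ) = rng μ), comp (rng μ) μ h = μ
  comp_src_id : ∀ μ (h : src μ = rng (src μ)), comp μ (src μ) h = μ
  factor : ∀ μ (m n : Fin k → ℕ), deg μ = m + n →
    ∃! p : Path × Path, ∃ h : src p.1 = rng p.2,
      deg p.1 = m ∧ deg p.2 = n ∧ comp p.1 p.2 h = μ

namespace KGraph

variable {k : ℕ}

/-- The set `Λ^min(μ,ν)` of pairs `(α,β)` with `μα = νβ` a minimal common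
extension of `μ` and `ν`. -/
def lmin (Λ : KGraph k) (μ ν : Λ.Path) : Set (Λ.Path × Λ.Path) :=
  {p | ∃ (h1 : Λ.src μ = Λ.rng p.1) (h2 : Λ.src ν = Λ.rng p.2),
    Λ.comp μ p.1 h1 = Λ.comp ν p.2 h2 ∧
    Λ.deg μ + Λ.deg p.1 = Λ.deg μ ⊔ Λ.deg ν}

/-- `Λ` is finitely aligned when every `Λ^min(μ,ν)` is finite. -/
def FinitelyAligned (Λ : KGraph k) : Prop := ∀ μ ν : Λ.Path, (Λ.lmin μ ν).Finite

/-- `X ⊆ vΛ` is exhaustive: every path with range `v` has a minimal common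
extension with some member of `X`. -/
def Exhaustive (Λ : KGraph k) (v : Λ.Path) (X : Set Λ.Path) : Prop :=
  ∀ lam : Λ.Path, Λ.rng lam = v → ∃ τ ∈ X, Λ.lmin lam τ ≠ ∅

/-- `Λ` is row finite: finitely many edges of each colour into each vertex. -/
def RowFinite (Λ : KGraph k) : Prop :=
  ∀ v : Λ.Path, Λ.deg v = 0 → ∀ i : Fin k,
    {e : Λ.Path | Λ.deg e = Pi.single i 1 ∧ Λ.rng e = v}.Finite

/-- `Λ` has no sources: every vertex receives an edge of each colour. -/
def NoSources (Λ : KGraph k) : Prop :=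
  ∀ v : Λ.Path, Λ.deg v = 0 → ∀ i : Fin k,
    {e : Λ.Path | Λ.deg e = Pi.single i 1 ∧ Λ.rng e = v}.Nonempty

end KGraph

/-- A self-similar `k`-graph `(G,Λ,φ)`. -/
structure SelfSimilar (k : ℕ) (G : Type) [Group G] (Λ : KGraph k) where
  act : G → Λ.Path → Λ.Path
  φ : G → Λ.Path → G
  act_one : ∀ μ, act 1 μ = μ
  act_mul : ∀ g h μ, act (g * h) μ = act g (act h μ)
  deg_act : ∀ g μ, Λ.deg (act g μ) = Λ.deg μ
  src_act : ∀ g μ, Λ.src (act g μ) = act g (Λ.src μ)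
  rng_act : ∀ g μ, Λ.rng (act g μ) = act g (Λ.rng μ)
  φ_mul : ∀ g h μ, φ (g * h) μ = φ g (act h μ) * φ h μ
  act_comp : ∀ g μ ν (h : Λ.src μ = Λ.rng ν)
      (h' : Λ.src (act g μ) = Λ.rng (act (φ g μ) ν)),
      act g (Λ.comp μ ν h) = Λ.comp (act g μ) (act (φ g μ) ν) h'
  φ_comp : ∀ g μ ν (h : Λ.src μ = Λ.rng ν),
      φ g (Λ.comp μ ν h) = φ (φ g μ) ν
  φ_vtx : ∀ g v, Λ.deg v = 0 → φ g v = g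

variable {k : ℕ} {G : Type} [Group G] {Λ : KGraph k}

/-- Orthogonality of two triples: `Λ^min(μ,ξ) = Λ^min(ν,η) = ∅`. -/
def Orth (Λ : KGraph k) (t u : Λ.Path × G × Λ.Path) : Prop :=
  Λ.lmin t.1 u.1 = ∅ ∧ Λ.lmin t.2.2 u.2.2 = ∅

/-- Membership in `S_{G,Λ}`: a finite set of pairwise orthogonal triples
`(μ,g,ν)` with `s(μ) = g⬝s(ν)`. -/
def IsElem (SS : SelfSimilar k G Λ) (F : Set (Λ.Path × G × Λ.Path)) : Prop :=
  F.Finite ∧ (∀ t ∈ F, Λ.src t.1 = SS.act t.2.1 (Λ.src t.2.2)) ∧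
    ∀ t ∈ F, ∀ u ∈ F, t ≠ u → Orth Λ t u

/-- The multiplication of `S_{G,Λ}`. -/
def smul (SS : SelfSimilar k G Λ) (E F : Set (Λ.Path × G × Λ.Path)) :
    Set (Λ.Path × G × Λ.Path) :=
  {t | ∃ μ g ν ξ h η α β, (μ, g, ν) ∈ E ∧ (ξ, h, η) ∈ F ∧ (α, β) ∈ Λ.lmin ν ξ ∧
    ∃ (h1 : Λ.src μ = Λ.rng (SS.act g α)) (h2 : Λ.src η = Λ.rng (SS.act h⁻¹ β)),
      t = (Λ.comp μ (SS.act g α) h1,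
           SS.φ g α * SS.φ h (SS.act h⁻¹ β),
           Λ.comp η (SS.act h⁻¹ β) h2)}

/-- The involution `F* = {(ν,g⁻¹,μ) : (μ,g,ν) ∈ F}`. -/
def sstar (F : Set (Λ.Path × G × Λ.Path)) : Set (Λ.Path × G × Λ.Path) :=
  {t | (t.2.2, t.2.1⁻¹, t.1) ∈ F}

/-- The singleton idempotent `ι_μ = {(μ,e_G,μ)}`. -/
def iota (Λ : KGraph k) (G : Type) [Group G] (μ : Λ.Path) :
    Set (Λ.Path × G × Λ.Path) := {(μ, (1 : G), μ)}

/-- Idempotents of `S_{G,Λ}`. -/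
def IsIdem (SS : SelfSimilar k G Λ) (E : Set (Λ.Path × G × Λ.Path)) : Prop :=
  IsElem SS E ∧ smul SS E E = E

/-- The natural partial order of the inverse semigroup `S_{G,Λ}`:
`s ≤ t` iff `s = te` for some idempotent `e`. -/
def leS (SS : SelfSimilar k G Λ) (s t : Set (Λ.Path × G × Λ.Path)) : Prop :=
  ∃ E, IsIdem SS E ∧ smul SS t E = s

/-- `τ` is strongly fixed by `g`. -/
def StronglyFixed (SS : SelfSimilar k G Λ) (g : G) (τ : Λ.Path) : Prop :=
  SS.act g τ = τ ∧ SS.φ g τ = 1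

/-- The set `SF_g` of paths strongly fixed by `g`. -/
def SFg (SS : SelfSimilar k G Λ) (g : G) : Set Λ.Path :=
  {τ | SS.act g τ = τ ∧ SS.φ g τ = 1}

/-- `SF_g` is locally exhausted. -/
def LocallyExhausted (SS : SelfSimilar k G Λ) (g : G) : Prop :=
  ∀ v : Λ.Path, Λ.deg v = 0 →
    ∃ M : Set Λ.Path, M.Finite ∧ (∀ τ ∈ M, τ ∈ SFg SS g ∧ Λ.rng τ = v) ∧
      ∀ τ ∈ SFg SS g, Λ.rng τ = v → ∃ τ' ∈ M, Λ.lmin τ τ' ≠ ∅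

/-- The principal ideal `J_F` admits a finite cover. -/
def HasFiniteCover (SS : SelfSimilar k G Λ) (F : Set (Λ.Path × G × Λ.Path)) : Prop :=
  ∃ C : Set (Set (Λ.Path × G × Λ.Path)), C.Finite ∧
    (∀ E ∈ C, IsIdem SS E ∧ smul SS F E = E) ∧
    ∀ E, IsIdem SS E → smul SS F E = E → E ≠ ∅ → ∃ E' ∈ C, smul SS E E' ≠ ∅

/-- A (proper, nonzero) filter in the idempotent semilattice `E(S_{G,Λ})`. -/
def IsFilterE (SS : SelfSimilar k G Λ) (𝓕 : Set (Set (Λ.Path × G × Λ.Path))) : Prop :=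
  𝓕.Nonempty ∧ (∀ E ∈ 𝓕, IsIdem SS E) ∧ (∅ ∉ 𝓕) ∧
    (∀ E ∈ 𝓕, ∀ F ∈ 𝓕, smul SS E F ∈ 𝓕) ∧
    ∀ E ∈ 𝓕, ∀ F, IsIdem SS F → smul SS F E = E → F ∈ 𝓕

/-- An ultrafilter: a maximal filter in `E(S_{G,Λ})`. -/
def IsUltrafilterE (SS : SelfSimilar k G Λ) (𝓕 : Set (Set (Λ.Path × G × Λ.Path))) : Prop :=
  IsFilterE SS 𝓕 ∧ ∀ 𝓖, IsFilterE SS 𝓖 → 𝓕 ⊆ 𝓖 → 𝓖 = 𝓕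

/-- `n ≤ m` for `m ∈ (ℕ ∪ {∞})^k` and `n ∈ ℕ^k`. -/
def LeDeg {k : ℕ} (m : Fin k → ℕ∞) (n : Fin k → ℕ) : Prop :=
  ∀ i, (n i : ℕ∞) ≤ m i

/-- A boundary path `x` of a finitely aligned `k`-graph, recorded via its
degree `d(x) ∈ (ℕ∪{∞})^k` and its initial segments `x(0,n)` for `n ≤ d(x)`. -/
structure BoundaryPath (Λ : KGraph k) where
  bdeg : Fin k → ℕ∞
  seg : (Fin k → ℕ) → Λ.Path
  deg_seg : ∀ n, LeDeg bdeg n → Λ.deg (seg n) = n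
  rng_seg : ∀ n, LeDeg bdeg n → Λ.rng (seg n) = seg 0
  seg_comp : ∀ m n : Fin k → ℕ, LeDeg bdeg (m + n) →
    ∃ (τ : Λ.Path) (h : Λ.src (seg m) = Λ.rng τ),
      Λ.deg τ = n ∧ seg (m + n) = Λ.comp (seg m) τ h
  seg_junk : ∀ n, ¬ LeDeg bdeg n → seg n = seg 0
  boundary : ∀ n, LeDeg bdeg n → ∀ X : Set Λ.Path, X.Finite →
    (∀ τ ∈ X, Λ.rng τ = Λ.src (seg n) ∧ τ ≠ Λ.src (seg n)) →
    KGraph.Exhaustive Λ (Λ.src (seg n)) X →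
    ∃ τ ∈ X, ∃ (_ : LeDeg bdeg (n + Λ.deg τ)) (h : Λ.src (seg n) = Λ.rng τ),
      seg (n + Λ.deg τ) = Λ.comp (seg n) τ h

/-- `z = σ^n(x)`, the shift of the boundary path `x` by `n`. -/
def IsShift (Λ : KGraph k) (x : BoundaryPath Λ) (n : Fin k → ℕ)
    (z : BoundaryPath Λ) : Prop :=
  (∀ i, z.bdeg i = x.bdeg i - (n i : ℕ∞)) ∧
    ∀ p, LeDeg z.bdeg p → ∃ h : Λ.src (x.seg n) = Λ.rng (z.seg p),
      x.seg (n + p) = Λ.comp (x.seg n) (z.seg p) h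

/-- `z = g⬝x` for boundary paths. -/
def IsActB (SS : SelfSimilar k G Λ) (g : G) (x z : BoundaryPath Λ) : Prop :=
  z.bdeg = x.bdeg ∧ ∀ p, LeDeg x.bdeg p → z.seg p = SS.act g (x.seg p)

/-- `y = lam⬝z`, the concatenation of a finite path with a boundary path. -/
def IsCompB (Λ : KGraph k) (lam : Λ.Path) (z y : BoundaryPath Λ) : Prop :=
  (∀ i, y.bdeg i = (Λ.deg lam i : ℕ∞) + z.bdeg i) ∧
    ∀ p, LeDeg z.bdeg p → ∃ h : Λ.src lam = Λ.rng (z.seg p),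
      y.seg (Λ.deg lam + p) = Λ.comp lam (z.seg p) h

/-- `x ∈ Z(lam)`, i.e. `x(0,d(lam)) = lam`. -/
def InZ (Λ : KGraph k) (x : BoundaryPath Λ) (lam : Λ.Path) : Prop :=
  LeDeg x.bdeg (Λ.deg lam) ∧ x.seg (Λ.deg lam) = lam

/-- `y` is a fixed point for `θ_{{(μ,g,ν)}}`: `y ∈ Z(ν)` and `μ(g⬝σ^{d(ν)}(y)) = y`. -/
def FixedPt (SS : SelfSimilar k G Λ) (μ : Λ.Path) (g : G) (ν : Λ.Path)
    (y : BoundaryPath Λ) : Prop :=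
  InZ Λ y ν ∧ ∃ z w, IsShift Λ y (Λ.deg ν) z ∧ IsActB SS g z w ∧ IsCompB Λ μ w y

/-- `y` is an interior fixed point for `θ_{{(μ,g,ν)}}`: some cylinder containing
`y` consists entirely of fixed points. -/
def InteriorFixedPt (SS : SelfSimilar k G Λ) (μ : Λ.Path) (g : G) (ν : Λ.Path)
    (y : BoundaryPath Λ) : Prop :=
  ∃ η : Λ.Path, InZ Λ y η ∧ ∀ y', InZ Λ y' η → FixedPt SS μ g ν y'

/-- `G`-aperiodic condition (A). -/
def CondA (SS : SelfSimilar k G Λ) : Prop :=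
  ∀ v : Λ.Path, Λ.deg v = 0 → ∃ x : BoundaryPath Λ, x.seg 0 = v ∧
    ∀ (m n : Fin k → ℕ), LeDeg x.bdeg m → LeDeg x.bdeg n →
      ∀ (g : G) (z w : BoundaryPath Λ),
        IsShift Λ x m z → IsShift Λ x n w → IsActB SS g w z → m = n

/-- `(G,Λ)` is `G`-cofinal. -/
def GCofinal (SS : SelfSimilar k G Λ) : Prop :=
  ∀ v : Λ.Path, Λ.deg v = 0 → ∀ x : BoundaryPath Λ,
    ∃ n : Fin k → ℕ, LeDeg x.bdeg n ∧ ∃ (g : G) (p : Λ.Path),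
      Λ.rng p = v ∧ Λ.src p = SS.act g (Λ.src (x.seg n))

/-- The ultrafilter `F_x` associated to a boundary path `x`. -/
def Fx (SS : SelfSimilar k G Λ) (x : BoundaryPath Λ) :
    Set (Set (Λ.Path × G × Λ.Path)) :=
  {E | IsIdem SS E ∧ ∃ n : Fin k → ℕ, LeDeg x.bdeg n ∧
    (x.seg n, (1 : G), x.seg n) ∈ E}

/-!
Every triple of an idempotent `E ≤ ι_μ` has the form `(μτ, e_G, μτ)`, and a product of
two idempotents is nonzero exactly when they contain diagonal triples `(ζ,e_G,ζ)`,
`(ξ,e_G,ξ)` with `Λ^min(ζ,ξ) ≠ ∅`. Since `Λ^min(μλ,μτ) = Λ^min(λ,τ)`, testing the cover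
property on the singletons `ι_{μλ} ≤ ι_μ` gives exhaustiveness of `Ω_C`, and conversely.
-/

theorem Pi.add_sup_add_left {ι α : Type*} [LinearOrder α] [Add α] [AddLeftMono α]
    (a b c : ι → α) : (a + b) ⊔ (a + c) = a + (b ⊔ c) :=
  funext fun _ => max_add_add_left _ _ _

namespace KGraph

variable (Λ)

theorem comp_eq_self_of_deg_eq_zero {μ ρ : Λ.Path} (h : Λ.src μ = Λ.rng ρ)
    (hρ : Λ.deg ρ = 0) : Λ.comp μ ρ h = μ := by
  obtain rfl : ρ = Λ.src μ := by rw [h, Λ.rng_vtx ρ hρ]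
  exact Λ.comp_src_id μ h

theorem deg_eq_zero_of_comp_eq_self {μ ρ : Λ.Path} {h : Λ.src μ = Λ.rng ρ}
    (he : Λ.comp μ ρ h = μ) : Λ.deg ρ = 0 := by
  have := congrArg Λ.deg he
  rwa [Λ.deg_comp, add_eq_left] at this

theorem comp_left_cancel {μ x y : Λ.Path} {hx : Λ.src μ = Λ.rng x} {hy : Λ.src μ = Λ.rng y}
    (he : Λ.comp μ x hx = Λ.comp μ y hy) : x = y := by
  have hdeg : Λ.deg x = Λ.deg y :=
    add_left_cancel (by rw [← Λ.deg_comp μ x hx, ← Λ.deg_comp μ y hy, he])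
  obtain ⟨_, -, huniq⟩ := Λ.factor (Λ.comp μ x hx) (Λ.deg μ) (Λ.deg x) (Λ.deg_comp μ x hx)
  exact congrArg Prod.snd
    ((huniq (μ, x) ⟨hx, rfl, rfl, rfl⟩).trans (huniq (μ, y) ⟨hy, rfl, hdeg.symm, he.symm⟩).symm)

theorem comp_comp {μ ν ρ : Λ.Path} (hμ : Λ.src μ = Λ.rng ν) (hν : Λ.src ν = Λ.rng ρ) :
    Λ.comp (Λ.comp μ ν hμ) ρ (by rwa [Λ.src_comp]) =
      Λ.comp μ (Λ.comp ν ρ hν) (by rwa [Λ.rng_comp]) :=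
  Λ.comp_assoc μ ν ρ hμ _ hν _

theorem lmin_comp_comp {μ lam τ : Λ.Path} (hl : Λ.src μ = Λ.rng lam)
    (hτ : Λ.src μ = Λ.rng τ) :
    Λ.lmin (Λ.comp μ lam hl) (Λ.comp μ τ hτ) = Λ.lmin lam τ := by
  ext ⟨α, β⟩
  simp only [lmin, Set.mem_ofPred_eq, Λ.src_comp, Λ.deg_comp, Pi.add_sup_add_left, add_assoc,
    add_right_inj]
  refine exists_congr fun hα => exists_congr fun hβ => and_congr_left fun _ => ?_
  rw [Λ.comp_comp hl hα, Λ.comp_comp hτ hβ]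
  exact ⟨Λ.comp_left_cancel, fun he => by simp only [he]⟩

theorem mem_lmin_comp_right {ζ ρ : Λ.Path} (h : Λ.src ζ = Λ.rng ρ) {α β : Λ.Path} :
    (α, β) ∈ Λ.lmin ζ (Λ.comp ζ ρ h) ↔ α = ρ ∧ β = Λ.src (Λ.comp ζ ρ h) := by
  have hsup : Λ.deg ζ ⊔ Λ.deg (Λ.comp ζ ρ h) = Λ.deg (Λ.comp ζ ρ h) :=
    sup_eq_right.2 (Λ.deg_comp ζ ρ h ▸ le_self_add)
  constructor
  · rintro ⟨hα, hβ, hc, hd⟩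
    have hβ0 : Λ.deg β = 0 := by
      have := congrArg Λ.deg hc
      rwa [Λ.deg_comp, Λ.deg_comp (Λ.comp ζ ρ h), hd, hsup, left_eq_add] at this
    rw [Λ.comp_eq_self_of_deg_eq_zero hβ hβ0] at hc
    exact ⟨Λ.comp_left_cancel hc, (Λ.rng_vtx β hβ0).symm.trans hβ.symm⟩
  · rintro ⟨rfl, rfl⟩
    refine ⟨h, (Λ.rng_vtx _ (Λ.deg_src _)).symm, ?_, ?_⟩
    · exact (Λ.comp_eq_self_of_deg_eq_zero _ (Λ.deg_src _)).symm
    · rw [hsup, Λ.deg_comp]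

end KGraph

theorem SelfSimilar.φ_one (SS : SelfSimilar k G Λ) (μ : Λ.Path) : SS.φ 1 μ = 1 := by
  have h := SS.φ_mul 1 1 μ
  rwa [one_mul, SS.act_one, left_eq_mul] at h

section InverseSemigroup

variable (SS : SelfSimilar k G Λ)

theorem isElem_iota (ζ : Λ.Path) : IsElem SS (iota Λ G ζ) := by
  refine ⟨Set.finite_singleton _, ?_, ?_⟩
  · rintro t rfl
    exact (SS.act_one _).symm
  · rintro t rfl u rfl hne
    exact absurd rfl hne

theorem comp_mem_smul {E F : Set (Λ.Path × G × Λ.Path)} {ζ ξ α β : Λ.Path}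
    (hζ : (ζ, 1, ζ) ∈ E) (hξ : (ξ, 1, ξ) ∈ F) (hab : (α, β) ∈ Λ.lmin ζ ξ)
    (hα : Λ.src ζ = Λ.rng α) :
    (Λ.comp ζ α hα, (1 : G), Λ.comp ζ α hα) ∈ smul SS E F := by
  have ⟨_, hβ, hc, _⟩ := hab
  refine ⟨ζ, 1, ζ, ξ, 1, ξ, α, β, hζ, hξ, hab, by rwa [SS.act_one],
    by rwa [inv_one, SS.act_one], ?_⟩
  simp only [SS.act_one, inv_one, SS.φ_one, mul_one, hc]

theorem smul_iota_iota_comp (ζ ρ : Λ.Path) (h : Λ.src ζ = Λ.rng ρ) :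
    smul SS (iota Λ G ζ) (iota Λ G (Λ.comp ζ ρ h)) = iota Λ G (Λ.comp ζ ρ h) := by
  ext t
  constructor
  · rintro ⟨_, _, _, _, _, _, α, β, h₁, h₂, hab, hα, hβ, rfl⟩
    simp only [iota, Set.mem_singleton_iff, Prod.mk.injEq] at h₁ h₂
    obtain ⟨rfl, rfl, rfl⟩ := h₁
    obtain ⟨rfl, rfl, rfl⟩ := h₂
    obtain ⟨rfl, rfl⟩ := (Λ.mem_lmin_comp_right h).1 hab
    simp only [iota, SS.act_one, inv_one, SS.φ_one, mul_one, Λ.comp_src_id]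
    rfl
  · rintro rfl
    exact comp_mem_smul SS (Set.mem_singleton _) (Set.mem_singleton _)
      ((Λ.mem_lmin_comp_right h).2 ⟨rfl, rfl⟩) h

theorem isIdem_iota (ζ : Λ.Path) : IsIdem SS (iota Λ G ζ) := by
  refine ⟨isElem_iota SS ζ, ?_⟩
  have := smul_iota_iota_comp SS ζ (Λ.src ζ) (Λ.rng_vtx _ (Λ.deg_src ζ)).symm
  rwa [Λ.comp_src_id] at this

variable {SS}

theorem exists_lmin_nonempty_of_smul_nonempty {E F : Set (Λ.Path × G × Λ.Path)}
    (h : (smul SS E F).Nonempty) : ∃ t ∈ E, ∃ u ∈ F, (Λ.lmin t.2.2 u.1).Nonempty := by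
  obtain ⟨-, _, _, _, _, _, _, _, _, ht, hu, hab, -⟩ := h
  exact ⟨_, ht, _, hu, _, hab⟩

theorem IsElem.eq_of_fst_eq_comp {E : Set (Λ.Path × G × Λ.Path)} (hE : IsElem SS E)
    {t u : Λ.Path × G × Λ.Path} (ht : t ∈ E) (hu : u ∈ E) {ρ : Λ.Path}
    {hρ : Λ.src u.1 = Λ.rng ρ} (h : t.1 = Λ.comp u.1 ρ hρ) : t = u := by
  by_contra hne
  have horth := (hE.2.2 u hu t ht (Ne.symm hne)).1
  rw [h] at horth
  exact Set.eq_empty_iff_forall_notMem.1 horth _ ((Λ.mem_lmin_comp_right hρ).2 ⟨rfl, rfl⟩)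

theorem IsElem.eq_of_snd_eq_comp {E : Set (Λ.Path × G × Λ.Path)} (hE : IsElem SS E)
    {t u : Λ.Path × G × Λ.Path} (ht : t ∈ E) (hu : u ∈ E) {ρ : Λ.Path}
    {hρ : Λ.src u.2.2 = Λ.rng ρ} (h : t.2.2 = Λ.comp u.2.2 ρ hρ) : t = u := by
  by_contra hne
  have horth := (hE.2.2 u hu t ht (Ne.symm hne)).2
  rw [h] at horth
  exact Set.eq_empty_iff_forall_notMem.1 horth _ ((Λ.mem_lmin_comp_right hρ).2 ⟨rfl, rfl⟩)

/- Writing `t = (μ₁ (g₁⬝α), _, η (h⁻¹⬝β))` as a product of `(μ₁,g₁,ν₁), (ξ,h,η) ∈ E`,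
orthogonality forces `t = (μ₁,g₁,ν₁) = (ξ,h,η)`; then `α, β` are vertices, so
`ν₁ = ξ = μ₁` and `g₁ = g₁ h = g₁²`. -/
theorem IsIdem.eq_diag {E : Set (Λ.Path × G × Λ.Path)} (hE : IsIdem SS E)
    {t : Λ.Path × G × Λ.Path} (ht : t ∈ E) : t = (t.1, 1, t.1) := by
  have ht' := ht
  rw [← hE.2] at ht'
  obtain ⟨μ₁, g₁, ν₁, ξ, h, η, α, β, h₁, h₂, ⟨hα, hβ, hc, -⟩, _, _, heq⟩ := ht'
  have e₁ : t = (μ₁, g₁, ν₁) := hE.1.eq_of_fst_eq_comp ht h₁ (h := by rw [heq])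
  have e₂ : t = (ξ, h, η) := hE.1.eq_of_snd_eq_comp ht h₂ (h := by rw [heq])
  obtain ⟨rfl, rfl, rfl⟩ : μ₁ = ξ ∧ g₁ = h ∧ ν₁ = η := by
    simpa only [Prod.mk.injEq] using e₁.symm.trans e₂
  have e₃ := heq.symm.trans e₁
  simp only [Prod.mk.injEq] at e₃
  obtain ⟨hfst, hmid, hsnd⟩ := e₃
  have hα0 : Λ.deg α = 0 := by
    simpa only [SS.deg_act] using Λ.deg_eq_zero_of_comp_eq_self hfst
  have hβ0 : Λ.deg β = 0 := by
    simpa only [SS.deg_act] using Λ.deg_eq_zero_of_comp_eq_self hsnd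
  have hν₁ : ν₁ = μ₁ := by
    rwa [Λ.comp_eq_self_of_deg_eq_zero hα hα0, Λ.comp_eq_self_of_deg_eq_zero hβ hβ0] at hc
  rw [SS.φ_vtx _ _ hα0, SS.φ_vtx _ _ (by rwa [SS.deg_act]), mul_eq_left] at hmid
  rw [e₁, hν₁, hmid]

theorem exists_eq_comp_of_smul_iota_eq {μ : Λ.Path} {E : Set (Λ.Path × G × Λ.Path)}
    (hE : smul SS (iota Λ G μ) E = E) {t : Λ.Path × G × Λ.Path} (ht : t ∈ E) :
    ∃ (τ : Λ.Path) (h : Λ.src μ = Λ.rng τ), t.1 = Λ.comp μ τ h := by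
  rw [← hE] at ht
  obtain ⟨_, _, _, _, _, _, _, _, hι, -, -, hμ, -, rfl⟩ := ht
  simp only [iota, Set.mem_singleton_iff, Prod.mk.injEq] at hι
  obtain ⟨rfl, rfl, rfl⟩ := hι
  exact ⟨_, hμ, rfl⟩

theorem IsIdem.exists_eq_iota_comp {μ : Λ.Path} {E : Set (Λ.Path × G × Λ.Path)}
    (hE : IsIdem SS E) (hEμ : smul SS (iota Λ G μ) E = E) {t : Λ.Path × G × Λ.Path}
    (ht : t ∈ E) :
    ∃ (τ : Λ.Path) (h : Λ.src μ = Λ.rng τ), t = (Λ.comp μ τ h, 1, Λ.comp μ τ h) := by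
  obtain ⟨τ, h, hτ⟩ := exists_eq_comp_of_smul_iota_eq hEμ ht
  exact ⟨τ, h, hτ ▸ hE.eq_diag ht⟩

end InverseSemigroup

theorem stmt9_general (SS : SelfSimilar k G Λ)
    (μ : Λ.Path) (C : Set (Set (Λ.Path × G × Λ.Path)))
    (hC : ∀ E ∈ C, IsIdem SS E ∧ smul SS (iota Λ G μ) E = E) :
    ((∀ E, IsIdem SS E → smul SS (iota Λ G μ) E = E → E ≠ ∅ →
        ∃ E' ∈ C, smul SS E E' ≠ ∅) ↔
      (∀ lam : Λ.Path, Λ.rng lam = Λ.src μ →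
        ∃ (τ : Λ.Path) (h : Λ.src μ = Λ.rng τ),
          (∃ E ∈ C, (Λ.comp μ τ h, (1 : G), Λ.comp μ τ h) ∈ E) ∧
          Λ.lmin lam τ ≠ ∅)) := by
  constructor
  · intro hcover lam hlam
    obtain ⟨E', hE'C, hne⟩ := hcover _ (isIdem_iota SS (Λ.comp μ lam hlam.symm))
      (smul_iota_iota_comp SS μ lam hlam.symm) (Set.singleton_ne_empty _)
    obtain ⟨t, rfl, u, hu, hlmin⟩ :=
      exists_lmin_nonempty_of_smul_nonempty (Set.nonempty_iff_ne_empty.2 hne)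
    obtain ⟨τ, hτ, rfl⟩ := (hC E' hE'C).1.exists_eq_iota_comp (hC E' hE'C).2 hu
    rw [Λ.lmin_comp_comp] at hlmin
    exact ⟨τ, hτ, ⟨E', hE'C, hu⟩, hlmin.ne_empty⟩
  · intro hexhaustive E hE hEμ hne
    obtain ⟨t, ht⟩ := Set.nonempty_iff_ne_empty.2 hne
    obtain ⟨lam, hl, rfl⟩ := hE.exists_eq_iota_comp hEμ ht
    obtain ⟨τ, hτ, ⟨E', hE'C, hτE'⟩, hlmin⟩ := hexhaustive lam hl.symm
    obtain ⟨⟨α, β⟩, hab⟩ := Set.nonempty_iff_ne_empty.2 hlmin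
    rw [← Λ.lmin_comp_comp hl hτ] at hab
    exact ⟨E', hE'C, Set.nonempty_iff_ne_empty.1 ⟨_, comp_mem_smul SS ht hτE' hab hab.1⟩⟩

/-- a collection `C ⊆ J_{ι_μ}` is a cover for `ι_μ` iff the set
`Ω_C = {τ : (μτ,e_G,μτ) ∈ ⋃ C}` is exhaustive in `s(μ)Λ`. -/
theorem stmt9 (SS : SelfSimilar k G Λ) (hfa : Λ.FinitelyAligned)
    (μ : Λ.Path) (C : Set (Set (Λ.Path × G × Λ.Path)))
    (hC : ∀ E ∈ C, IsIdem SS E ∧ smul SS (iota Λ G μ) E = E) :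
    ((∀ E, IsIdem SS E → smul SS (iota Λ G μ) E = E → E ≠ ∅ →
        ∃ E' ∈ C, smul SS E E' ≠ ∅) ↔
      (∀ lam : Λ.Path, Λ.rng lam = Λ.src μ →
        ∃ (τ : Λ.Path) (h : Λ.src μ = Λ.rng τ),
          (∃ E ∈ C, (Λ.comp μ τ h, (1 : G), Λ.comp μ τ h) ∈ E) ∧
          Λ.lmin lam τ ≠ ∅)) :=
  stmt9_general SS μ C hC
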